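/- Let φ be a one-variable first-order modal formula with counting quantifiers. Then φ is satisfiable with respect to QK (i.e., satisfiable in some constant domain first-order Kripke model) if and only if there exists a quasimodel for φ. -/

import Mathlib

/-! Syntax of one-variable first-order modal formulas with counting quantifiers:
    φ ::= P(x) | ¬φ | (φ∧φ) | ◇φ | ∃[≤c]x φ. -/

inductive Fml : Type
  | atom : ℕ → Fml
  | neg : Fml → Fml
  | conj : Fml → Fml → Fml
  | dia : Fml → Fml
  | countLe : ℕ → Fml → Fml
deriving DecidableEq

namespace Fml

/-- Subformulas. -/
def sub : Fml → Finset Fml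
  | atom n => {atom n}
  | neg ψ => insert (neg ψ) ψ.sub
  | conj ψ χ => insert (conj ψ χ) (ψ.sub ∪ χ.sub)
  | dia ψ => insert (dia ψ) ψ.sub
  | countLe c ψ => insert (countLe c ψ) ψ.sub

/-- Modal depth. -/
def md : Fml → ℕ
  | atom _ => 0
  | neg ψ => ψ.md
  | conj ψ χ => max ψ.md χ.md
  | dia ψ => ψ.md + 1
  | countLe _ ψ => ψ.md

/-- Capacity: the largest counting-quantifier subscript (0 if none). -/
def cpt : Fml → ℕ
  | atom _ => 0
  | neg ψ => ψ.cpt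
  | conj ψ χ => max ψ.cpt χ.cpt
  | dia ψ => ψ.cpt
  | countLe c ψ => max c ψ.cpt

/-- Length of the formula as a string, counting subscripts written in binary. -/
def len : Fml → ℕ
  | atom _ => 1
  | neg ψ => ψ.len + 1
  | conj ψ χ => ψ.len + χ.len + 1
  | dia ψ => ψ.len + 1
  | countLe c ψ => ψ.len + Nat.size c + 1

/-- Predicate symbols occurring in a formula. -/
def preds : Fml → Finset ℕ
  | atom n => {n}
  | neg ψ => ψ.preds
  | conj ψ χ => ψ.preds ∪ χ.preds
  | dia ψ => ψ.preds
  | countLe _ ψ => ψ.preds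

def imp (ψ χ : Fml) : Fml := neg (conj ψ (neg χ))
def or (ψ χ : Fml) : Fml := neg (conj (neg ψ) (neg χ))
def iff (ψ χ : Fml) : Fml := conj (ψ.imp χ) (χ.imp ψ)
def box (ψ : Fml) : Fml := neg (dia (neg ψ))
/-- `∃x ψ := ¬∃[≤0]x ψ`. -/
def ex (ψ : Fml) : Fml := neg (countLe 0 ψ)
/-- `∀x ψ := ∃[≤0]x ¬ψ`. -/
def fal (ψ : Fml) : Fml := countLe 0 (neg ψ)
/-- A tautology. -/
def top : Fml := neg (conj (atom 0) (neg (atom 0)))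

/-- `boxIter n ψ` is `□^n ψ`. -/
def boxIter : ℕ → Fml → Fml
  | 0, ψ => ψ
  | n+1, ψ => (boxIter n ψ).box

/-- `boxLe m ψ` is `⋀_{k=0}^{m} □^k ψ`. -/
def boxLe : ℕ → Fml → Fml
  | 0, ψ => ψ
  | n+1, ψ => conj (boxLe n ψ) (boxIter (n+1) ψ)

end Fml

/-- A first-order Kripke model `M = (W,R,D,d,I)` (unary predicates suffice for the
one-variable fragment). -/
structure KModel where
  W : Type
  R : W → W → Prop
  D : Type
  Dne : Nonempty D
  dom : W → Set D
  domNe : ∀ w, (dom w).Nonempty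
  I : W → ℕ → Set D
  Isub : ∀ w p, I w p ⊆ dom w

/-- Satisfaction `M,w ⊨^a φ`. -/
def KModel.sat (M : KModel) : Fml → M.W → M.D → Prop
  | .atom p, w, a => a ∈ M.I w p
  | .neg ψ, w, a => ¬ M.sat ψ w a
  | .conj ψ χ, w, a => M.sat ψ w a ∧ M.sat χ w a
  | .dia ψ, w, a => ∃ v, M.R w v ∧ M.sat ψ v a
  | .countLe c ψ, w, _ => {b | b ∈ M.dom w ∧ M.sat ψ w b}.encard ≤ (c : ℕ∞)

def KModel.constDom (M : KModel) : Prop := ∀ u v, M.dom u = M.dom v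
def KModel.expDom (M : KModel) : Prop := ∀ u v, M.R u v → M.dom u ⊆ M.dom v
def KModel.decDom (M : KModel) : Prop := ∀ u v, M.R u v → M.dom v ⊆ M.dom u

/-- Satisfiability with respect to QK (constant domains). -/
def satQK (φ : Fml) : Prop :=
  ∃ M : KModel, M.constDom ∧ ∃ w a, a ∈ M.dom w ∧ M.sat φ w a

/-- Satisfiability with respect to QK^exp (expanding domains). -/
def satQKexp (φ : Fml) : Prop :=
  ∃ M : KModel, M.expDom ∧ ∃ w a, a ∈ M.dom w ∧ M.sat φ w a

/-- Satisfiability with respect to QK^dec (decreasing domains). -/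
def satQKdec (φ : Fml) : Prop :=
  ∃ M : KModel, M.decDom ∧ ∃ w a, a ∈ M.dom w ∧ M.sat φ w a

/-- `R` is the immediate-successor (parent–child) relation of a rooted irreflexive
intransitive tree of depth ≤ m with root `r`. -/
def IsTreeOfDepth {W : Type} (R : W → W → Prop) (r : W) (m : ℕ) : Prop :=
  ∃ depth : W → ℕ,
    depth r = 0 ∧ (∀ w, depth w ≤ m) ∧
    (∀ u v, R u v → depth v = depth u + 1) ∧
    (∀ v, v ≠ r → ∃! u, R u v) ∧
    (∀ v, Relation.ReflTransGen R r v)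

/-- A type for φ: a Boolean-saturated subset of sub(φ). -/
def IsType (φ : Fml) (t : Finset Fml) : Prop :=
  t ⊆ φ.sub ∧
  (∀ ψ, Fml.neg ψ ∈ φ.sub → (Fml.neg ψ ∈ t ↔ ψ ∉ t)) ∧
  (∀ ψ χ, Fml.conj ψ χ ∈ φ.sub → (Fml.conj ψ χ ∈ t ↔ ψ ∈ t ∧ χ ∈ t))

/-- A quasistate for φ: a nonempty set of types with a multiplicity function
`μ : T → {1,…,cpt(φ)+1}` satisfying ∃[≤c]-saturation. -/
structure IsQuasistate (φ : Fml) (T : Finset (Finset Fml)) (μ : Finset Fml → ℕ) : Prop where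
  nonempty : T.Nonempty
  types : ∀ t ∈ T, IsType φ t
  mu_pos : ∀ t ∈ T, 1 ≤ μ t
  mu_le : ∀ t ∈ T, μ t ≤ φ.cpt + 1
  count : ∀ t ∈ T, ∀ c ξ, Fml.countLe c ξ ∈ φ.sub →
    (Fml.countLe c ξ ∈ t ↔ (T.filter (fun t' => ξ ∈ t')).sum μ ≤ c)

/-- `(W,≺,q,I,{r_i})` is a quasimodel for φ. -/
structure IsQuasimodel (φ : Fml) {W I : Type} (prec : W → W → Prop) (root : W)
    (T : W → Finset (Finset Fml)) (μ : W → Finset Fml → ℕ)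
    (r : I → W → Finset Fml) : Prop where
  tree : IsTreeOfDepth prec root φ.md
  qs : ∀ w, IsQuasistate φ (T w) (μ w)
  ine : Nonempty I
  run : ∀ i w, r i w ∈ T w
  witness : ∃ w t, t ∈ T w ∧ φ ∈ t
  coherence : ∀ i w v ξ, Fml.dia ξ ∈ φ.sub → prec w v → ξ ∈ r i v → Fml.dia ξ ∈ r i w
  saturation : ∀ i w ξ, Fml.dia ξ ∈ φ.sub → Fml.dia ξ ∈ r i w → ∃ v, prec w v ∧ ξ ∈ r i v
  mult : ∀ w t, t ∈ T w → (μ w t : ℕ∞) = min {i : I | r i w = t}.encard ((φ.cpt : ℕ∞) + 1)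

/-- Bundled quasimodels for φ. -/
structure Quasimodel (φ : Fml) where
  W : Type
  I : Type
  prec : W → W → Prop
  root : W
  T : W → Finset (Finset Fml)
  μ : W → Finset Fml → ℕ
  r : I → W → Finset Fml
  isQM : IsQuasimodel φ prec root T μ r

/-! From a quasimodel one gets a constant-domain model on its tree whose individuals are the runs:
by induction on subformulas, a run satisfies at a node exactly the formulas of its type there.
Conversely, unravelling a constant-domain model from a satisfying world into the tree of its paths
of length at most `md φ` preserves truth at the root; the types realised at each node, with their
multiplicities capped at `cpt φ + 1`, form a quasimodel whose runs are the individuals. In both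
directions the counting clauses agree with the quasistate condition because a bound `≤ c` with
`c ≤ cpt φ` cannot distinguish a multiplicity from its cap. -/

theorem Set.encard_preimage_finset {I κ : Type*} (f : I → κ) (s : Finset κ) :
    (f ⁻¹' s).encard = ∑ t ∈ s, (f ⁻¹' {t}).encard := by
  rw [← finsum_mem_coe_finset, ← s.finite_toSet.encard_biUnion (Set.pairwiseDisjoint_fiber f _),
    Set.biUnion_preimage_singleton]

theorem sum_min_le_iff {κ : Type*} {s : Finset κ} {n : κ → ℕ∞} {c C : ℕ} (hc : c ≤ C) :
    ∑ t ∈ s, min (n t) (C + 1) ≤ c ↔ ∑ t ∈ s, n t ≤ c := by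
  refine ⟨fun h => ?_, fun h => (Finset.sum_le_sum fun _ _ => min_le_left _ _).trans h⟩
  have hc' : (c : ℕ∞) < C + 1 := by exact_mod_cast Nat.lt_succ_of_le hc
  have huncapped : ∀ t ∈ s, min (n t) (C + 1) = n t := fun t ht =>
    min_eq_left_iff.2 <| le_of_lt <| (min_lt_iff.1 <|
      ((Finset.single_le_sum (fun _ _ => zero_le) ht).trans h).trans_lt hc').resolve_right
      (lt_irrefl _)
  rwa [Finset.sum_congr rfl huncapped] at h

theorem encard_le_iff_sum_le {I κ : Type*} {f : I → κ} {T : Finset κ} (hf : ∀ i, f i ∈ T)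
    {μ : κ → ℕ} {C : ℕ} (hμ : ∀ t ∈ T, (μ t : ℕ∞) = min (f ⁻¹' {t}).encard (C + 1))
    (p : κ → Prop) [DecidablePred p] {c : ℕ} (hc : c ≤ C) :
    {i | p (f i)}.encard ≤ c ↔ ∑ t ∈ T.filter p, μ t ≤ c := by
  have hpre : {i | p (f i)} = f ⁻¹' ↑(T.filter p) := by ext i; simp [hf]
  rw [hpre, Set.encard_preimage_finset, ← sum_min_le_iff hc,
    Finset.sum_congr rfl fun t ht => (hμ t (Finset.mem_filter.1 ht).1).symm]
  exact_mod_cast Iff.rfl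

namespace Fml

theorem mem_sub_self (φ : Fml) : φ ∈ φ.sub := by
  cases φ <;> simp [sub]

theorem sub_subset_of_mem_sub {φ ψ : Fml} (h : ψ ∈ φ.sub) : ψ.sub ⊆ φ.sub := by
  induction φ with
  | atom n => simp only [sub, Finset.mem_singleton] at h; subst h; rfl
  | neg χ ih | dia χ ih | countLe _ χ ih =>
    rcases Finset.mem_insert.1 h with rfl | h
    · rfl
    · exact (ih h).trans (Finset.subset_insert _ _)
  | conj χ₁ χ₂ ih₁ ih₂ =>
    rcases Finset.mem_insert.1 h with rfl | h
    · rfl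
    rcases Finset.mem_union.1 h with h | h
    · exact (ih₁ h).trans (Finset.subset_union_left.trans (Finset.subset_insert _ _))
    · exact (ih₂ h).trans (Finset.subset_union_right.trans (Finset.subset_insert _ _))

theorem cpt_le_of_mem_sub {φ ψ : Fml} (h : ψ ∈ φ.sub) : ψ.cpt ≤ φ.cpt := by
  induction φ with
  | atom n => simp only [sub, Finset.mem_singleton] at h; subst h; rfl
  | neg χ ih | dia χ ih =>
    rcases Finset.mem_insert.1 h with rfl | h
    · rfl
    · exact ih h
  | countLe _ χ ih =>
    rcases Finset.mem_insert.1 h with rfl | h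
    · rfl
    · exact (ih h).trans (le_max_right _ _)
  | conj χ₁ χ₂ ih₁ ih₂ =>
    rcases Finset.mem_insert.1 h with rfl | h
    · rfl
    rcases Finset.mem_union.1 h with h | h
    · exact (ih₁ h).trans (le_max_left _ _)
    · exact (ih₂ h).trans (le_max_right _ _)

variable {φ ψ χ : Fml}

theorem mem_sub_of_neg_mem_sub (h : neg ψ ∈ φ.sub) : ψ ∈ φ.sub :=
  sub_subset_of_mem_sub h (by simp [sub, mem_sub_self])

theorem mem_sub_of_conj_mem_sub (h : conj ψ χ ∈ φ.sub) : ψ ∈ φ.sub ∧ χ ∈ φ.sub :=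
  ⟨sub_subset_of_mem_sub h (by simp [sub, mem_sub_self]),
    sub_subset_of_mem_sub h (by simp [sub, mem_sub_self])⟩

theorem mem_sub_of_dia_mem_sub (h : dia ψ ∈ φ.sub) : ψ ∈ φ.sub :=
  sub_subset_of_mem_sub h (by simp [sub, mem_sub_self])

theorem mem_sub_of_countLe_mem_sub {c : ℕ} (h : countLe c ψ ∈ φ.sub) : ψ ∈ φ.sub :=
  sub_subset_of_mem_sub h (by simp [sub, mem_sub_self])

theorem le_cpt_of_countLe_mem_sub {c : ℕ} (h : countLe c ψ ∈ φ.sub) : c ≤ φ.cpt :=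
  (le_max_left _ _).trans (cpt_le_of_mem_sub h)

end Fml

namespace Quasimodel

variable {φ : Fml} (Q : Quasimodel φ)

def toModel : KModel where
  W := Q.W
  R := Q.prec
  D := Q.I
  Dne := Q.isQM.ine
  dom _ := Set.univ
  domNe _ := @Set.univ_nonempty _ Q.isQM.ine
  I w p := {i | Fml.atom p ∈ Q.r i w}
  Isub _ _ := Set.subset_univ _

theorem toModel_constDom : Q.toModel.constDom := fun _ _ => rfl

theorem sat_toModel_iff {ψ : Fml} (hψ : ψ ∈ φ.sub) (w : Q.W) (i : Q.I) :
    Q.toModel.sat ψ w i ↔ ψ ∈ Q.r i w := by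
  induction ψ generalizing w i with
  | atom n => rfl
  | neg χ ih =>
    have hw := (Q.isQM.qs w).types _ (Q.isQM.run i w)
    exact (not_congr (ih (Fml.mem_sub_of_neg_mem_sub hψ) w i)).trans (hw.2.1 χ hψ).symm
  | conj χ₁ χ₂ ih₁ ih₂ =>
    have hw := (Q.isQM.qs w).types _ (Q.isQM.run i w)
    obtain ⟨h₁, h₂⟩ := Fml.mem_sub_of_conj_mem_sub hψ
    exact (and_congr (ih₁ h₁ w i) (ih₂ h₂ w i)).trans (hw.2.2 χ₁ χ₂ hψ).symm
  | dia χ ih =>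
    have hχ := Fml.mem_sub_of_dia_mem_sub hψ
    constructor
    · rintro ⟨v, hwv, hv⟩
      exact Q.isQM.coherence i w v χ hψ hwv ((ih hχ v i).1 hv)
    · intro h
      obtain ⟨v, hwv, hv⟩ := Q.isQM.saturation i w χ hψ h
      exact ⟨v, hwv, (ih hχ v i).2 hv⟩
  | countLe c χ ih =>
    have hχ := Fml.mem_sub_of_countLe_mem_sub hψ
    have hfiber : {b | b ∈ Q.toModel.dom w ∧ Q.toModel.sat χ w b} = {b | χ ∈ Q.r b w} := by
      ext b
      exact (and_iff_right (Set.mem_univ b)).trans (ih hχ w b)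
    rw [(Q.isQM.qs w).count _ (Q.isQM.run i w) c χ hψ, ← encard_le_iff_sum_le
      (Q.isQM.run · w) (Q.isQM.mult w) (χ ∈ ·) (Fml.le_cpt_of_countLe_mem_sub hψ), ← hfiber]
    rfl

theorem exists_run_eq {w : Q.W} {t : Finset Fml} (ht : t ∈ Q.T w) : ∃ i, Q.r i w = t := by
  have hpos : (1 : ℕ∞) ≤ Q.μ w t := by exact_mod_cast (Q.isQM.qs w).mu_pos t ht
  rw [Q.isQM.mult w t ht, le_min_iff, Set.one_le_encard_iff_nonempty] at hpos
  exact hpos.1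

end Quasimodel

theorem satQK_of_quasimodel {φ : Fml} (Q : Quasimodel φ) : satQK φ := by
  obtain ⟨w, t, ht, hφ⟩ := Q.isQM.witness
  obtain ⟨i, rfl⟩ := Q.exists_run_eq ht
  exact ⟨Q.toModel, Q.toModel_constDom, w, i, Set.mem_univ i,
    (Q.sat_toModel_iff (Fml.mem_sub_self φ) w i).2 hφ⟩

namespace KModel

section Unravel

instance quiver (M : KModel) : Quiver M.W := ⟨fun u v => PLift (M.R u v)⟩

variable (M : KModel) (w₀ : M.W) (m : ℕ)

def unravel : KModel where
  W := {p : Σ v : M.W, Quiver.Path w₀ v // p.2.length ≤ m}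
  R p q := ∃ e : p.1.1 ⟶ q.1.1, q.1.2 = p.1.2.cons e
  D := M.D
  Dne := M.Dne
  dom p := M.dom p.1.1
  domNe p := M.domNe p.1.1
  I p := M.I p.1.1
  Isub p := M.Isub p.1.1

def unravelRoot : (M.unravel w₀ m).W := ⟨⟨w₀, .nil⟩, Nat.zero_le m⟩

variable {M w₀ m}

theorem constDom.unravel (hM : M.constDom) : (M.unravel w₀ m).constDom :=
  fun p q => hM p.1.1 q.1.1

theorem sat_unravel_iff {ψ : Fml} (p : (M.unravel w₀ m).W) (a : M.D)
    (hp : p.1.2.length + ψ.md ≤ m) : (M.unravel w₀ m).sat ψ p a ↔ M.sat ψ p.1.1 a := by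
  induction ψ generalizing p a with
  | atom n => rfl
  | neg χ ih => exact not_congr (ih p a hp)
  | conj χ₁ χ₂ ih₁ ih₂ =>
    simp only [Fml.md] at hp
    exact and_congr (ih₁ p a (by omega)) (ih₂ p a (by omega))
  | dia χ ih =>
    simp only [Fml.md] at hp
    constructor
    · rintro ⟨q, ⟨e, hq⟩, hsat⟩
      refine ⟨q.1.1, e.down, (ih q a ?_).1 hsat⟩
      rw [hq, Quiver.Path.length_cons]
      omega
    · rintro ⟨v, e, hsat⟩
      let q : (M.unravel w₀ m).W :=
        ⟨⟨v, p.1.2.cons ⟨e⟩⟩, by simp only [Quiver.Path.length_cons]; omega⟩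
      exact ⟨q, ⟨⟨e⟩, rfl⟩, (ih q a (by simp only [q, Quiver.Path.length_cons]; omega)).2 hsat⟩
  | countLe c χ ih =>
    have hfiber : {b | b ∈ (M.unravel w₀ m).dom p ∧ (M.unravel w₀ m).sat χ p b} =
        {b | b ∈ M.dom p.1.1 ∧ M.sat χ p.1.1 b} :=
      Set.ext fun b => and_congr_right fun _ => ih p b hp
    exact iff_of_eq (congrArg (·.encard ≤ (c : ℕ∞)) hfiber)

theorem reflTransGen_unravelRoot {v : M.W} (p : Quiver.Path w₀ v) (hp : p.length ≤ m) :
    Relation.ReflTransGen (M.unravel w₀ m).R (M.unravelRoot w₀ m) ⟨⟨v, p⟩, hp⟩ := by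
  induction p with
  | nil => rfl
  | cons p e ih =>
    rw [Quiver.Path.length_cons] at hp
    exact (ih (by omega)).tail ⟨e, rfl⟩

theorem existsUnique_unravel_parent (q : (M.unravel w₀ m).W) (hq : q ≠ M.unravelRoot w₀ m) :
    ∃! p, (M.unravel w₀ m).R p q := by
  obtain ⟨⟨v, _ | ⟨p, e⟩⟩, hlen⟩ := q
  · exact absurd rfl hq
  refine ⟨⟨⟨_, p⟩, (Nat.le_succ _).trans hlen⟩, ⟨e, rfl⟩, ?_⟩
  rintro ⟨⟨u, p'⟩, _⟩ ⟨e', h⟩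
  obtain rfl := Quiver.Path.obj_eq_of_cons_eq_cons h
  obtain rfl := eq_of_heq (Quiver.Path.heq_of_cons_eq_cons h)
  rfl

theorem isTreeOfDepth_unravel : IsTreeOfDepth (M.unravel w₀ m).R (M.unravelRoot w₀ m) m := by
  refine ⟨fun p => p.1.2.length, rfl, fun p => p.2, ?_, existsUnique_unravel_parent,
    fun ⟨⟨_, p⟩, hp⟩ => reflTransGen_unravelRoot p hp⟩
  rintro p q ⟨e, hq⟩
  simp only [hq, Quiver.Path.length_cons]

end Unravel

section Types

open Classical in
noncomputable def typeAt (φ : Fml) (M : KModel) (w : M.W) (a : M.D) : Finset Fml :=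
  φ.sub.filter (M.sat · w a)

variable {φ : Fml} {M : KModel}

theorem mem_typeAt {w : M.W} {a : M.D} {ψ : Fml} :
    ψ ∈ M.typeAt φ w a ↔ ψ ∈ φ.sub ∧ M.sat ψ w a := by
  classical
  simp [typeAt]

theorem isType_typeAt (w : M.W) (a : M.D) : IsType φ (M.typeAt φ w a) := by
  refine ⟨fun ψ h => (mem_typeAt.1 h).1, fun ψ hψ => ?_, fun ψ χ hψχ => ?_⟩
  · simp only [mem_typeAt, hψ, Fml.mem_sub_of_neg_mem_sub hψ, true_and]
    rfl
  · obtain ⟨h₁, h₂⟩ := Fml.mem_sub_of_conj_mem_sub hψχ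
    simp only [mem_typeAt, hψχ, h₁, h₂, true_and]
    rfl

variable (φ M) (I : Set M.D)

open Classical in
noncomputable def realizedTypes (w : M.W) : Finset (Finset Fml) :=
  φ.sub.powerset.filter fun t => ∃ i : I, M.typeAt φ w i = t

noncomputable def typeMult (w : M.W) (t : Finset Fml) : ℕ :=
  (min {i : I | M.typeAt φ w i = t}.encard (φ.cpt + 1)).toNat

variable {φ M I}

theorem mem_realizedTypes {w : M.W} {t : Finset Fml} :
    t ∈ realizedTypes φ M I w ↔ ∃ i : I, M.typeAt φ w i = t := by
  classical
  refine Finset.mem_filter.trans (and_iff_right_of_imp ?_)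
  rintro ⟨i, rfl⟩
  exact Finset.mem_powerset.2 fun ψ h => (mem_typeAt.1 h).1

theorem typeAt_mem_realizedTypes (w : M.W) (i : I) : M.typeAt φ w i ∈ realizedTypes φ M I w :=
  mem_realizedTypes.2 ⟨i, rfl⟩

theorem typeMult_eq (w : M.W) (t : Finset Fml) :
    (typeMult φ M I w t : ℕ∞) = min {i : I | M.typeAt φ w i = t}.encard (φ.cpt + 1) :=
  ENat.natCast_toNat (min_le_right _ _ |>.trans_lt (by exact_mod_cast ENat.natCast_lt_top _)).ne

theorem encard_sat_eq {w : M.W} (hI : M.dom w = I) (ψ : Fml) :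
    {b | b ∈ M.dom w ∧ M.sat ψ w b}.encard = {i : I | M.sat ψ w i}.encard := by
  change _ = (Subtype.val ⁻¹' {b | M.sat ψ w b}).encard
  rw [← Subtype.val_injective.encard_image, Subtype.image_preimage_coe, hI]
  rfl

theorem isQuasistate (hI : ∀ w, M.dom w = I) (hne : I.Nonempty) (w : M.W) :
    IsQuasistate φ (realizedTypes φ M I w) (typeMult φ M I w) where
  nonempty := hne.elim fun a ha => ⟨_, typeAt_mem_realizedTypes w ⟨a, ha⟩⟩
  types _ ht := by
    obtain ⟨i, rfl⟩ := mem_realizedTypes.1 ht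
    exact isType_typeAt w i
  mu_pos _ ht := by
    obtain ⟨i, rfl⟩ := mem_realizedTypes.1 ht
    have h : (1 : ℕ∞) ≤ typeMult φ M I w (M.typeAt φ w i) := by
      rw [typeMult_eq]
      exact le_min (Set.one_le_encard_iff_nonempty.2 ⟨i, rfl⟩) le_add_self
    exact_mod_cast h
  mu_le t _ := by
    have h := (typeMult_eq (φ := φ) (I := I) w t).trans_le (min_le_right _ _)
    exact_mod_cast h
  count _ ht c ξ hsub := by
    obtain ⟨i, rfl⟩ := mem_realizedTypes.1 ht
    have hξ := Fml.mem_sub_of_countLe_mem_sub hsub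
    have hfiber : {j : I | M.sat ξ w j} = {j : I | ξ ∈ M.typeAt φ w j} := by
      ext j
      exact (and_iff_right hξ).symm.trans mem_typeAt.symm
    rw [mem_typeAt, and_iff_right hsub, ← encard_le_iff_sum_le (typeAt_mem_realizedTypes w)
      (fun t _ => typeMult_eq w t) (ξ ∈ ·) (Fml.le_cpt_of_countLe_mem_sub hsub), ← hfiber,
      ← encard_sat_eq (hI w)]
    rfl

theorem nonempty_quasimodel_of_isTreeOfDepth (hM : M.constDom) {root : M.W}
    (hT : IsTreeOfDepth M.R root φ.md) {w : M.W} {a : M.D} (ha : a ∈ M.dom w)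
    (hφ : M.sat φ w a) : Nonempty (Quasimodel φ) := by
  have hI (w : M.W) : M.dom w = M.dom root := hM w root
  refine ⟨⟨M.W, M.dom root, M.R, root, realizedTypes φ M (M.dom root),
    typeMult φ M (M.dom root), fun i w => M.typeAt φ w i, ?_⟩⟩
  exact {
    tree := hT
    qs := isQuasistate hI (M.domNe root)
    ine := (M.domNe root).to_subtype
    run := fun i w => typeAt_mem_realizedTypes w i
    witness := ⟨w, _, typeAt_mem_realizedTypes w ⟨a, hI w ▸ ha⟩,
      mem_typeAt.2 ⟨Fml.mem_sub_self φ, hφ⟩⟩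
    coherence := fun _ _ v _ hsub hwv h => mem_typeAt.2 ⟨hsub, v, hwv, (mem_typeAt.1 h).2⟩
    saturation := fun _ _ _ hsub h =>
      let ⟨v, hwv, hv⟩ := (mem_typeAt.1 h).2
      ⟨v, hwv, mem_typeAt.2 ⟨Fml.mem_sub_of_dia_mem_sub hsub, hv⟩⟩
    mult := fun w t _ => typeMult_eq w t }

end Types

end KModel

/-- φ is satisfiable with respect to QK iff there exists a quasimodel for φ. -/
theorem stmt_0 (φ : Fml) : satQK φ ↔ Nonempty (Quasimodel φ) := by
  refine ⟨?_, fun ⟨Q⟩ => satQK_of_quasimodel Q⟩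
  rintro ⟨M, hM, w₀, a, ha, hφ⟩
  have hroot : (M.unravel w₀ φ.md).sat φ (M.unravelRoot w₀ φ.md) a :=
    (KModel.sat_unravel_iff _ a (by simp [KModel.unravelRoot])).2 hφ
  exact KModel.nonempty_quasimodel_of_isTreeOfDepth hM.unravel KModel.isTreeOfDepth_unravel ha
    hroot
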